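/- arXiv:math/0308267 — 4 statements merged into one kernel-verified Lean document; each statement's English description precedes it below -/
import Mathlib

section
/- For the function f(u) = -1/log(u) defined on (0,1), the inequality f(u+v) ≤ f(u) + f(v) holds for all u, v ∈ (0, 1/4] with u + v < 1. -/
private lemma two_exp_bound (y : ℝ) : 2 * (1 + y - Real.log 2) ≤ Real.exp y := by
  have h2 : Real.exp (Real.log 2) = 2 := Real.exp_log two_pos
  have h := Real.add_one_le_exp (y - Real.log 2)
  calc 2 * (1 + y - Real.log 2) = 2 * ((y - Real.log 2) + 1) := by ring
    _ ≤ 2 * Real.exp (y - Real.log 2) := by linarith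
    _ = Real.exp (Real.log 2) * Real.exp (y - Real.log 2) := by rw [h2]
    _ = Real.exp (Real.log 2 + (y - Real.log 2)) := (Real.exp_add _ _).symm
    _ = Real.exp y := by ring_nf

private lemma key_ineq (a b : ℝ) (hb : 2 * Real.log 2 ≤ b) (hba : b ≤ a) :
    Real.exp (-a) + Real.exp (-b) ≤ Real.exp (-(a * b / (a + b))) := by
  have hl : (0.6931471803 : ℝ) < Real.log 2 := Real.log_two_gt_d9
  have hb1 : (1:ℝ) < b := by linarith
  have hb0 : (0:ℝ) < b := by linarith
  have ha0 : (0:ℝ) < a := by linarith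
  have hS : (0:ℝ) < a + b := by linarith
  have hSne : a + b ≠ 0 := ne_of_gt hS
  set h := a * b / (a + b) with hdef
  have e1 : a - h = a^2 / (a+b) := by rw [hdef]; field_simp; ring
  have e1b : b - h = b^2 / (a+b) := by rw [hdef]; field_simp; ring
  -- claim 1 : exp (h - a) ≤ b / (a+b)
  have c1 : Real.exp (h - a) ≤ b / (a + b) := by
    have hx : (a+b)/b ≤ Real.exp (a - h) := by
      refine le_trans ?_ (two_exp_bound (a - h))
      rw [e1, div_le_iff₀ hb0]
      have e2 : a^2/(a+b) * ((a+b) * b) = a^2 * b := by field_simp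
      nlinarith [e2, mul_nonneg (mul_nonneg hb0.le (by linarith : (0:ℝ) ≤ b - 2*Real.log 2)) hS.le,
        mul_nonneg (by linarith : (0:ℝ) ≤ a - b)
          (by nlinarith : (0:ℝ) ≤ (2*b-1)*a + b*(b-1))]
    have hpos : 0 < (a+b)/b := div_pos hS hb0
    have : Real.exp (h - a) = (Real.exp (a - h))⁻¹ := by
      rw [← Real.exp_neg]; ring_nf
    rw [this]
    calc (Real.exp (a - h))⁻¹ ≤ ((a+b)/b)⁻¹ := inv_anti₀ hpos hx
      _ = b/(a+b) := by rw [inv_div]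
  -- claim 2 : exp (h - b) ≤ a / (a+b)
  have c2 : Real.exp (h - b) ≤ a / (a + b) := by
    have hx : (a+b)/a ≤ Real.exp (b - h) := by
      rcases le_total (a + b) (a * b) with hcase | hcase
      · -- use exp x ≥ 1 + x
        refine le_trans ?_ (by linarith [Real.add_one_le_exp (b - h)] :
          1 + (b - h) ≤ Real.exp (b - h))
        rw [e1b, div_le_iff₀ ha0]
        have e2 : b^2/(a+b) * ((a+b) * a) = b^2 * a := by field_simp
        nlinarith [e2, mul_nonneg hb0.le (by linarith : (0:ℝ) ≤ a*b - a - b)]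
      · -- use exp x ≥ 2 (1 + x - log 2)
        refine le_trans ?_ (two_exp_bound (b - h))
        rw [e1b, div_le_iff₀ ha0]
        have e2 : b^2/(a+b) * ((a+b) * a) = b^2 * a := by field_simp
        nlinarith [e2, mul_nonneg (mul_nonneg (by linarith : (0:ℝ) ≤ b - 2*Real.log 2) ha0.le) hS.le,
          mul_nonneg (by linarith : (0:ℝ) ≤ a - b) (by linarith : (0:ℝ) ≤ a + b - a*b)]
    have hpos : 0 < (a+b)/a := div_pos hS ha0
    have : Real.exp (h - b) = (Real.exp (b - h))⁻¹ := by
      rw [← Real.exp_neg]; ring_nf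
    rw [this]
    calc (Real.exp (b - h))⁻¹ ≤ ((a+b)/a)⁻¹ := inv_anti₀ hpos hx
      _ = a/(a+b) := by rw [inv_div]
  have expand : Real.exp (-a) + Real.exp (-b)
      = Real.exp (-h) * (Real.exp (h - a) + Real.exp (h - b)) := by
    rw [show -a = -h + (h - a) by ring, show -b = -h + (h - b) by ring,
      Real.exp_add, Real.exp_add, mul_add]
  rw [expand]
  have hsum : Real.exp (h - a) + Real.exp (h - b) ≤ 1 := by
    have : b/(a+b) + a/(a+b) = 1 := by field_simp; ring
    linarith
  calc Real.exp (-h) * (Real.exp (h - a) + Real.exp (h - b))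
      ≤ Real.exp (-h) * 1 := by
        exact mul_le_mul_of_nonneg_left hsum (Real.exp_pos _).le
    _ = Real.exp (-h) := mul_one _

private lemma aux_main (u v : ℝ) (hu : 0 < u) (hu4 : u ≤ 1/4) (hv : 0 < v) (hv4 : v ≤ 1/4)
    (huv' : u ≤ v) :
    -1 / Real.log (u + v) ≤ -1 / Real.log u + -1 / Real.log v := by
  have hl : (0.6931471803 : ℝ) < Real.log 2 := Real.log_two_gt_d9
  set a := -Real.log u with hadef
  set b := -Real.log v with hbdef
  have hlog4 : Real.log (1/4 : ℝ) = -(2 * Real.log 2) := by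
    rw [show (1/4 : ℝ) = ((2:ℝ)*2)⁻¹ by norm_num, Real.log_inv,
      Real.log_mul two_ne_zero two_ne_zero]
    ring
  have hbv : Real.log v ≤ Real.log (1/4 : ℝ) := Real.log_le_log hv hv4
  have hb : 2 * Real.log 2 ≤ b := by rw [hlog4] at hbv; linarith [hbv]
  have hba : b ≤ a := by
    have : Real.log u ≤ Real.log v := Real.log_le_log hu huv'
    simp only [hadef, hbdef]; linarith
  have hb0 : (0:ℝ) < b := by linarith
  have ha0 : (0:ℝ) < a := by linarith
  have hS : (0:ℝ) < a + b := by linarith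
  have hh0 : (0:ℝ) < a * b / (a + b) := div_pos (mul_pos ha0 hb0) hS
  have hue : Real.exp (-a) = u := by rw [hadef, neg_neg, Real.exp_log hu]
  have hve : Real.exp (-b) = v := by rw [hbdef, neg_neg, Real.exp_log hv]
  have hkey : u + v ≤ Real.exp (-(a * b / (a + b))) := by
    rw [← hue, ← hve]; exact key_ineq a b hb hba
  have hlog : Real.log (u + v) ≤ -(a * b / (a + b)) := by
    calc Real.log (u + v) ≤ Real.log (Real.exp (-(a * b / (a + b)))) :=
          Real.log_le_log (by linarith) hkey
      _ = -(a * b / (a + b)) := Real.log_exp _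
  have hc0 : 0 < -Real.log (u + v) := by linarith
  have step1 : -1 / Real.log (u + v) ≤ 1 / (a * b / (a + b)) := by
    have : -1 / Real.log (u + v) = 1 / (-Real.log (u + v)) := by ring
    rw [this]
    exact one_div_le_one_div_of_le hh0 (by linarith)
  have step2 : 1 / (a * b / (a + b)) = 1/a + 1/b := by
    field_simp
    ring
  have hra : -1 / Real.log u = 1/a := by rw [hadef]; ring
  have hrb : -1 / Real.log v = 1/b := by rw [hbdef]; ring
  rw [hra, hrb]
  linarith [step1, step2.symm.le, step2.le]

/-- Subadditivity of `f u = -1 / log u` on `(0, 1/4]` (with `u + v < 1`). -/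
theorem stmt_0 (u v : ℝ) (hu : 0 < u) (hu4 : u ≤ 1/4) (hv : 0 < v) (hv4 : v ≤ 1/4)
    (huv : u + v < 1) :
    -1 / Real.log (u + v) ≤ -1 / Real.log u + -1 / Real.log v := by
  rcases le_total u v with h | h
  · exact aux_main u v hu hu4 hv hv4 h
  · have := aux_main v u hv hv4 hu hu4 h
    rw [add_comm v u] at this
    linarith
end

section
/- Let (X,d) be a metric space. Define d_log(x,y) = 1/|log(min(d(x,y), 1/4))| for x ≠ y and d_log(x,x) = 0. Then d_log is a metric on X. -/
open scoped Classical

/-- Auxiliary: `Lf t = max (-log t) (2 log 2) = -log (min t (1/4))` for `t > 0`. -/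
noncomputable def Lf (t : ℝ) : ℝ := max (-Real.log t) (2 * Real.log 2)

lemma log2_gt_half : (1:ℝ)/2 < Real.log 2 := by
  have := Real.log_two_gt_d9; linarith

lemma cc_pos : (1:ℝ) < 2 * Real.log 2 := by have := log2_gt_half; linarith

lemma Lf_pos (t : ℝ) : 0 < Lf t :=
  lt_of_lt_of_le (by linarith [cc_pos]) (le_max_right _ _)

lemma Lf_anti {a b : ℝ} (ha : 0 < a) (hab : a ≤ b) : Lf b ≤ Lf a :=
  max_le_max (neg_le_neg (Real.log_le_log ha hab)) le_rfl

lemma log_quarter : Real.log (1/4) = -(2*Real.log 2) := by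
  rw [one_div, Real.log_inv, show (4:ℝ) = 2^2 by norm_num, Real.log_pow]
  push_cast; ring

lemma Lf_of_le {t : ℝ} (ht : 0 < t) (h4 : t ≤ 1/4) : Lf t = -Real.log t := by
  apply max_eq_left
  have := Real.log_le_log ht h4
  rw [log_quarter] at this
  linarith

lemma Lf_of_ge {t : ℝ} (h4 : 1/4 ≤ t) : Lf t = 2 * Real.log 2 := by
  apply max_eq_right
  have := Real.log_le_log (by norm_num : (0:ℝ) < 1/4) h4
  rw [log_quarter] at this
  linarith

lemma neglog_mul_mono {a b : ℝ} (ha : 0 < a) (hab : a ≤ b) (hb4 : b ≤ 1/4) :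
    a * (-Real.log a) ≤ b * (-Real.log b) := by
  have hb : 0 < b := lt_of_lt_of_le ha hab
  have h1 : Real.log (b/a) ≤ b/a - 1 := Real.log_le_sub_one_of_pos (div_pos hb ha)
  rw [Real.log_div (ne_of_gt hb) (ne_of_gt ha)] at h1
  have h3 : a * (Real.log b - Real.log a) ≤ b - a := by
    have := mul_le_mul_of_nonneg_left h1 (le_of_lt ha)
    calc a * (Real.log b - Real.log a) ≤ a * (b/a - 1) := this
      _ = b - a := by field_simp
  have h2 : 1 ≤ -Real.log b := by
    have := Real.log_le_log hb hb4
    rw [log_quarter] at this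
    linarith [cc_pos]
  nlinarith [mul_le_mul_of_nonneg_left h2 (sub_nonneg.mpr hab)]

lemma tLf_mono {a b : ℝ} (ha : 0 < a) (hab : a ≤ b) : a * Lf a ≤ b * Lf b := by
  have hb : 0 < b := lt_of_lt_of_le ha hab
  rcases le_total b (1/4) with hb4 | hb4
  · rw [Lf_of_le ha (le_trans hab hb4), Lf_of_le hb hb4]
    exact neglog_mul_mono ha hab hb4
  · rcases le_total (1/4) a with ha4 | ha4
    · rw [Lf_of_ge ha4, Lf_of_ge hb4]
      have := cc_pos
      nlinarith
    · have step1 : a * Lf a ≤ (1/4) * Lf (1/4) := by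
        rw [Lf_of_le ha ha4, Lf_of_le (by norm_num : (0:ℝ) < 1/4) le_rfl]
        exact neglog_mul_mono ha ha4 le_rfl
      have step2 : (1/4 : ℝ) * Lf (1/4) ≤ b * Lf b := by
        rw [Lf_of_ge (le_refl (1/4 : ℝ)), Lf_of_ge hb4]
        have := cc_pos
        nlinarith
      linarith

lemma Lf_subadd {a b : ℝ} (ha : 0 < a) (hab : a ≤ b) :
    1 / Lf (a + b) ≤ 1 / Lf a + 1 / Lf b := by
  have hb : 0 < b := lt_of_lt_of_le ha hab
  have hLa := Lf_pos a
  have hLb := Lf_pos b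
  have hLs := Lf_pos (a + b)
  -- key bound: Lf b - Lf (a+b) ≤ a / b
  have hdiff : Lf b - Lf (a + b) ≤ a / b := by
    rcases le_total (-Real.log b) (2 * Real.log 2) with hc | hc
    · have h1 : Lf b = 2 * Real.log 2 := max_eq_right hc
      have h2 : 2 * Real.log 2 ≤ Lf (a + b) := le_max_right _ _
      have : 0 ≤ a / b := le_of_lt (div_pos ha hb)
      linarith
    · have h1 : Lf b = -Real.log b := max_eq_left hc
      have h2 : -Real.log (a + b) ≤ Lf (a + b) := le_max_left _ _
      have h3 : Real.log ((a + b)/b) ≤ (a + b)/b - 1 :=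
        Real.log_le_sub_one_of_pos (div_pos (by linarith) hb)
      rw [Real.log_div (by positivity) (ne_of_gt hb)] at h3
      have h4 : (a + b)/b - 1 = a / b := by field_simp; ring
      linarith
  have hcs : 1 ≤ Lf (a + b) := le_trans (le_of_lt cc_pos) (le_max_right _ _)
  -- reduce to a polynomial inequality
  rw [div_add_div _ _ (ne_of_gt hLa) (ne_of_gt hLb),
      div_le_div_iff₀ hLs (mul_pos hLa hLb)]
  -- goal : 1 * (Lf a * Lf b) ≤ (Lf b + Lf a) * Lf (a+b)
  have h7 : Lf a * (Lf b - Lf (a + b)) ≤ Lf a * (a / b) :=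
    mul_le_mul_of_nonneg_left hdiff (le_of_lt hLa)
  have h8 : Lf a * (a / b) ≤ Lf b := by
    rw [mul_div_assoc', div_le_iff₀ hb]
    calc Lf a * a = a * Lf a := by ring
      _ ≤ b * Lf b := tLf_mono ha hab
      _ = Lf b * b := by ring
  have h9 : Lf b ≤ Lf b * Lf (a + b) := le_mul_of_one_le_right (le_of_lt hLb) hcs
  nlinarith

/-- `d_log(x,y) = 1/|log(min(d(x,y), 1/4))|` (with `d_log(x,x) = 0`) is a metric. -/
theorem stmt_3 {X : Type*} [MetricSpace X] (dlog : X → X → ℝ)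
    (h : ∀ x y : X, dlog x y =
      if x = y then 0 else 1 / |Real.log (min (dist x y) (1/4))|) :
    (∀ x, dlog x x = 0) ∧
    (∀ x y, 0 ≤ dlog x y) ∧
    (∀ x y, dlog x y = 0 → x = y) ∧
    (∀ x y, dlog x y = dlog y x) ∧
    (∀ x y z, dlog x z ≤ dlog x y + dlog y z) := by
  have key : ∀ x y : X, x ≠ y → dlog x y = 1 / Lf (dist x y) := by
    intro x y hxy
    rw [h, if_neg hxy]
    congr 1
    have hd : 0 < dist x y := dist_pos.mpr hxy
    have hlogq : Real.log (1/4) = -(2*Real.log 2) := log_quarter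
    rcases le_total (dist x y) (1/4) with h4 | h4
    · rw [min_eq_left h4, Lf_of_le hd h4, abs_of_nonpos]
      have := Real.log_le_log hd h4
      rw [hlogq] at this
      linarith [cc_pos]
    · rw [min_eq_right h4, Lf_of_ge h4, hlogq, abs_of_nonpos (by linarith [cc_pos])]
      ring
  have hrefl : ∀ x : X, dlog x x = 0 := fun x => by rw [h, if_pos rfl]
  have hnonneg : ∀ x y : X, 0 ≤ dlog x y := by
    intro x y
    rcases eq_or_ne x y with rfl | hxy
    · rw [hrefl]
    · rw [key x y hxy]
      exact le_of_lt (div_pos one_pos (Lf_pos _))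
  have hpos : ∀ x y : X, x ≠ y → 0 < dlog x y := by
    intro x y hxy
    rw [key x y hxy]
    exact div_pos one_pos (Lf_pos _)
  refine ⟨hrefl, hnonneg, ?_, ?_, ?_⟩
  · intro x y hxy
    by_contra hne
    exact absurd hxy (ne_of_gt (hpos x y hne))
  · intro x y
    rcases eq_or_ne x y with rfl | hxy
    · rfl
    · rw [key x y hxy, key y x hxy.symm, dist_comm]
  · intro x y z
    rcases eq_or_ne x z with rfl | hxz
    · rw [hrefl]
      exact add_nonneg (hnonneg x y) (hnonneg y x)
    rcases eq_or_ne x y with rfl | hxy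
    · rw [hrefl]; linarith [le_refl (dlog x z)]
    rcases eq_or_ne y z with rfl | hyz
    · rw [hrefl]; linarith [le_refl (dlog x y)]
    rw [key x z hxz, key x y hxy, key y z hyz]
    have d1 : 0 < dist x y := dist_pos.mpr hxy
    have d2 : 0 < dist y z := dist_pos.mpr hyz
    have d3 : 0 < dist x z := dist_pos.mpr hxz
    have htri : dist x z ≤ dist x y + dist y z := dist_triangle x y z
    have step1 : 1 / Lf (dist x z) ≤ 1 / Lf (dist x y + dist y z) :=
      one_div_le_one_div_of_le (Lf_pos _) (Lf_anti d3 htri)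
    rcases le_total (dist x y) (dist y z) with hle | hle
    · calc 1 / Lf (dist x z) ≤ 1 / Lf (dist x y + dist y z) := step1
        _ ≤ 1 / Lf (dist x y) + 1 / Lf (dist y z) := Lf_subadd d1 hle
    · calc 1 / Lf (dist x z) ≤ 1 / Lf (dist x y + dist y z) := step1
        _ = 1 / Lf (dist y z + dist x y) := by rw [add_comm]
        _ ≤ 1 / Lf (dist y z) + 1 / Lf (dist x y) := Lf_subadd d2 hle
        _ = 1 / Lf (dist x y) + 1 / Lf (dist y z) := by ring
end

section
/- Let d and d' be two metrics on a set X that are Hölder equivalent, i.e., there exist constants C₁, C₂, ν₁, ν₂ > 0 with C₁·d(x,y)^{ν₁} ≤ d'(x,y) ≤ C₂·d(x,y)^{ν₂} for all x,y. Then the associated metrics d_log and d'_log are Lipschitz equivalent. -/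
/-!
For `t > 0`, `|log (min t (1/4))| = max (-log t) (log 4)`. Taking logarithms turns each Hölder
inequality into an affine bound of `-log` of one distance by `-log` of the other, with nonnegative
slope. Since both gauges `max (-log t) (log 4)` are at least `log 4 > 0`, the constant term is
absorbed into the slope, so the gauges are comparable up to constant factors, and so are their
reciprocals `d_log`, `d'_log`.
-/

open scoped Classical

open Real

lemma max_le_mul_max_of_le_add_mul {u v a b L : ℝ} (hL : 0 < L) (hb : 0 ≤ b)
    (h : u ≤ a + b * v) : max u L ≤ (|a| / L + b + 1) * max v L := by
  set M := max v L
  have hLM : L ≤ M := le_max_right v L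
  have ha : a ≤ |a| / L * M :=
    calc a ≤ |a| / L * L := by rw [div_mul_cancel₀ _ hL.ne']; exact le_abs_self a
      _ ≤ |a| / L * M := by gcongr
  have hbv : b * v ≤ b * M := mul_le_mul_of_nonneg_left (le_max_left v L) hb
  have hdiv : 0 ≤ |a| / L := by positivity
  apply max_le <;> nlinarith

lemma neg_log_le_of_mul_rpow_le {s t C ν : ℝ} (ht : 0 < t) (hC : 0 < C) (h : C * t ^ ν ≤ s) :
    -log s ≤ -log C + ν * -log t := by
  have := log_le_log (by positivity) h
  rw [log_mul hC.ne' (by positivity), log_rpow ht] at this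
  linarith

lemma neg_log_le_of_le_mul_rpow {s t C ν : ℝ} (hs : 0 < s) (ht : 0 < t) (hC : 0 < C)
    (hν : 0 < ν) (h : s ≤ C * t ^ ν) :
    -log t ≤ log C / ν + ν⁻¹ * -log s := by
  have := log_le_log hs h
  rw [log_mul hC.ne' (by positivity), log_rpow ht] at this
  rw [div_eq_inv_mul, ← mul_add, le_inv_mul_iff₀ hν]
  linarith

lemma abs_log_min_quarter {t : ℝ} (ht : 0 < t) :
    |log (min t (1/4))| = max (-log t) (log 4) := by
  have hquarter : log (1/4) = -log 4 := by rw [one_div, log_inv]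
  rcases le_total t (1/4) with h | h
  · rw [min_eq_left h, abs_of_neg (log_neg ht (by linarith)),
      max_eq_left (by linarith [log_le_log ht h])]
  · rw [min_eq_right h, hquarter, abs_neg, abs_of_pos (log_pos (by norm_num)),
      max_eq_right (by linarith [log_le_log (by norm_num) h])]

theorem stmt_5_general {X : Type*} (d d' : X → X → ℝ)
    (hd0 : ∀ x y, 0 ≤ d x y)
    (hdiag : ∀ x y : X, d x y = 0 ↔ x = y)
    (C₁ C₂ ν₁ ν₂ : ℝ) (hC₁ : 0 < C₁) (hC₂ : 0 < C₂) (hν₁ : 0 < ν₁) (hν₂ : 0 < ν₂)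
    (hHolder : ∀ x y : X, C₁ * (d x y) ^ ν₁ ≤ d' x y ∧ d' x y ≤ C₂ * (d x y) ^ ν₂)
    (dlog dlog' : X → X → ℝ)
    (hlog : ∀ x y : X, dlog x y =
      if x = y then 0 else 1 / |Real.log (min (d x y) (1/4))|)
    (hlog' : ∀ x y : X, dlog' x y =
      if x = y then 0 else 1 / |Real.log (min (d' x y) (1/4))|) :
    ∃ c > (0:ℝ), ∃ c' > (0:ℝ), ∀ x y : X,
      c * dlog x y ≤ dlog' x y ∧ dlog' x y ≤ c' * dlog x y := by
  have hlog4 : (0 : ℝ) < log 4 := log_pos (by norm_num)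
  set K₁ := |-log C₁| / log 4 + ν₁ + 1
  set K₂ := |log C₂ / ν₂| / log 4 + ν₂⁻¹ + 1
  refine ⟨K₁⁻¹, by positivity, K₂, by positivity, fun x y => ?_⟩
  by_cases hxy : x = y
  · simp [hlog, hlog', hxy]
  have ht : 0 < d x y := (hd0 x y).lt_of_ne' (mt (hdiag x y).1 hxy)
  have hs : 0 < d' x y := lt_of_lt_of_le (by positivity) (hHolder x y).1
  set M := max (-log (d x y)) (log 4)
  set M' := max (-log (d' x y)) (log 4)
  have hM : 0 < M := hlog4.trans_le (le_max_right _ _)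
  have hM' : 0 < M' := hlog4.trans_le (le_max_right _ _)
  have hM'M : M' ≤ K₁ * M := max_le_mul_max_of_le_add_mul hlog4 hν₁.le
    (neg_log_le_of_mul_rpow_le ht hC₁ (hHolder x y).1)
  have hMM' : M ≤ K₂ * M' := max_le_mul_max_of_le_add_mul hlog4 (inv_nonneg.2 hν₂.le)
    (neg_log_le_of_le_mul_rpow hs ht hC₂ hν₂ (hHolder x y).2)
  rw [hlog, hlog', if_neg hxy, if_neg hxy, abs_log_min_quarter ht, abs_log_min_quarter hs]
  constructor
  · rw [← div_eq_inv_mul, div_div, div_le_div_iff₀ (by positivity) hM']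
    linarith
  · rw [mul_one_div, div_le_div_iff₀ hM' hM]
    linarith

/-- If two metrics `d`, `d'` on `X` are Hölder equivalent, then the associated metrics
`d_log` and `d'_log` are Lipschitz equivalent. -/
theorem stmt_5 {X : Type*} (d d' : X → X → ℝ)
    (hd0 : ∀ x y, 0 ≤ d x y) (hd'0 : ∀ x y, 0 ≤ d' x y)
    (hdiag : ∀ x y : X, d x y = 0 ↔ x = y) (hdiag' : ∀ x y : X, d' x y = 0 ↔ x = y)
    (C₁ C₂ ν₁ ν₂ : ℝ) (hC₁ : 0 < C₁) (hC₂ : 0 < C₂) (hν₁ : 0 < ν₁) (hν₂ : 0 < ν₂)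
    (hHolder : ∀ x y : X, C₁ * (d x y) ^ ν₁ ≤ d' x y ∧ d' x y ≤ C₂ * (d x y) ^ ν₂)
    (dlog dlog' : X → X → ℝ)
    (hlog : ∀ x y : X, dlog x y =
      if x = y then 0 else 1 / |Real.log (min (d x y) (1/4))|)
    (hlog' : ∀ x y : X, dlog' x y =
      if x = y then 0 else 1 / |Real.log (min (d' x y) (1/4))|) :
    ∃ c > (0:ℝ), ∃ c' > (0:ℝ), ∀ x y : X,
      c * dlog x y ≤ dlog' x y ∧ dlog' x y ≤ c' * dlog x y :=
  stmt_5_general d d' hd0 hdiag C₁ C₂ ν₁ ν₂ hC₁ hC₂ hν₁ hν₂ hHolder dlog dlog' hlog hlog'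
end

section
/- Let f : [0,1/4] → ℝ be given by f(0) = 0 and f(u) = -1/log(u) for u > 0. Then the function g(u) = f(u) + f(1/4) - f(u + 1/4) satisfies g(u) ≥ 0 for all u ∈ [0, 1/4]. -/
lemma log_le_div_e {x : ℝ} (hx : 0 < x) : Real.log x ≤ x / Real.exp 1 := by
  have h := Real.log_le_sub_one_of_pos (x := x / Real.exp 1) (by positivity)
  rw [Real.log_div (ne_of_gt hx) (by positivity), Real.log_exp] at h
  linarith

lemma key_ineq_s18 {v : ℝ} (h0 : 0 < v) (h1 : v ≤ 1) :
    Real.log (1+v) * (4*Real.log 2 - Real.log v) ≤ 4 * (Real.log 2)^2 := by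
  set L := Real.log 2 with hL
  have hlogv : Real.log v ≤ 0 := Real.log_nonpos (le_of_lt h0) h1
  have hL2 : (0.6931471803 : ℝ) < L := Real.log_two_gt_d9
  have hL2' : L < 0.6931471808 := Real.log_two_lt_d9
  rcases le_or_gt v (1/2) with hv | hv
  · -- small case
    have h1v : Real.log (1+v) ≤ v := by
      have := Real.log_le_sub_one_of_pos (x := 1+v) (by linarith)
      linarith
    have hvlog : -(v * Real.log v) ≤ 1 / Real.exp 1 := by
      have h := log_le_div_e (x := 1/v) (by positivity)
      rw [Real.log_div one_ne_zero (ne_of_gt h0), Real.log_one] at h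
      have : v * (0 - Real.log v) ≤ v * ((1/v) / Real.exp 1) :=
        mul_le_mul_of_nonneg_left h (le_of_lt h0)
      have hv' : v * ((1/v) / Real.exp 1) = 1 / Real.exp 1 := by
        field_simp
      nlinarith
    have hfac : 0 ≤ 4*L - Real.log v := by nlinarith
    have step1 : Real.log (1+v) * (4*L - Real.log v) ≤ v * (4*L - Real.log v) :=
      mul_le_mul_of_nonneg_right h1v hfac
    have hexp : (2.7182818283 : ℝ) < Real.exp 1 := Real.exp_one_gt_d9
    have hinv : 1 / Real.exp 1 < 0.368 := by
      rw [div_lt_iff₀ (by positivity)]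
      nlinarith
    nlinarith [mul_le_mul_of_nonneg_left hv (le_of_lt (show (0:ℝ) < 4*L by nlinarith))]
  · -- large case
    have hub1 : Real.log (1+v) ≤ L + (v-1)/2 := by
      have h2 : Real.log (1+v) = L + Real.log ((1+v)/2) := by
        rw [Real.log_div (by linarith) two_ne_zero]; ring
      have := Real.log_le_sub_one_of_pos (x := (1+v)/2) (by linarith)
      linarith
    have hlb : 1 - 1/v ≤ Real.log v := by
      have h := Real.log_le_sub_one_of_pos (x := 1/v) (by positivity)
      rw [Real.log_div one_ne_zero (ne_of_gt h0), Real.log_one] at h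
      linarith
    have hub2 : 4*L - Real.log v ≤ 4*L + 2*(1-v) := by
      have : 1/v - 1 ≤ 2*(1-v) := by
        rw [div_sub' (ne_of_gt h0), div_le_iff₀ h0]
        nlinarith
      linarith
    have hnn1 : 0 ≤ Real.log (1+v) := Real.log_nonneg (by linarith)
    have hnn2 : 0 ≤ L + (v-1)/2 := by nlinarith
    have step : Real.log (1+v) * (4*L - Real.log v) ≤ (L + (v-1)/2) * (4*L + 2*(1-v)) := by
      apply mul_le_mul hub1 hub2 (by nlinarith) hnn2
    nlinarith

/-- For `f(0) = 0` and `f(u) = -1/log u` for `u > 0`, the function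
`g(u) = f(u) + f(1/4) - f(u + 1/4)` is nonnegative on `[0, 1/4]`. -/
theorem stmt_18 (f : ℝ → ℝ) (hf0 : f 0 = 0)
    (hf : ∀ u : ℝ, 0 < u → f u = -1 / Real.log u) :
    ∀ u : ℝ, 0 ≤ u → u ≤ 1/4 → 0 ≤ f u + f (1/4) - f (u + 1/4) := by
  intro u hu0 hu4
  rcases eq_or_lt_of_le hu0 with rfl | hu
  · simp [hf0]
  · set L := Real.log 2 with hLdef
    have hLpos : 0 < L := Real.log_pos (by norm_num)
    have hquarter : Real.log (1/4 : ℝ) = -(2*L) := by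
      rw [show (1/4 : ℝ) = 2^(-2 : ℤ) by norm_num, Real.log_zpow]
      push_cast; ring
    -- A = -log u, B = 2L, C = -log(u+1/4)
    have ha : Real.log u < 0 := Real.log_neg hu (by linarith)
    have hA : 0 < -Real.log u := by linarith
    have haB : Real.log u ≤ -(2*L) := by
      rw [← hquarter]; exact Real.log_le_log hu hu4
    have hc : Real.log (u + 1/4) ≤ -L := by
      have : Real.log (u + 1/4) ≤ Real.log (1/2 : ℝ) := Real.log_le_log (by linarith) (by linarith)
      rw [show (1/2 : ℝ) = 2⁻¹ by norm_num, Real.log_inv] at this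
      linarith
    have hC : 0 < -Real.log (u + 1/4) := by linarith
    -- key inequality with v = 4u
    have hv0 : 0 < 4*u := by linarith
    have hv1 : 4*u ≤ 1 := by linarith
    have hk := key_ineq_s18 hv0 hv1
    have hlogv : Real.log (4*u) = 2*L + Real.log u := by
      rw [Real.log_mul (by norm_num) (ne_of_gt hu), show (4:ℝ) = 2^2 by norm_num,
        Real.log_pow]
      push_cast; ring
    have hlog1v : Real.log (1 + 4*u) = Real.log (u + 1/4) + 2*L := by
      rw [show (1 + 4*u : ℝ) = (u + 1/4) * 4 by ring,
        Real.log_mul (by linarith) (by norm_num), show (4:ℝ) = 2^2 by norm_num,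
        Real.log_pow]
      push_cast; ring
    rw [hlogv, hlog1v] at hk
    -- now: (log(u+1/4)+2L) * (4L - (2L + log u)) ≤ 4L^2
    -- i.e. (C needed) A*(B-C) ≤ B*C where A=-log u, B=2L, C=-log(u+1/4)
    have hmain : (-Real.log u) * ((2*L) - (-Real.log (u+1/4))) ≤ (2*L) * (-Real.log (u+1/4)) := by
      nlinarith
    -- conclude 1/A + 1/B ≥ 1/C
    have hfinal : 1 / (-Real.log (u+1/4)) ≤ 1 / (-Real.log u) + 1 / (2*L) := by
      rw [div_add_div _ _ (ne_of_gt hA) (by positivity), div_le_div_iff₀ hC (by positivity)]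
      nlinarith
    rw [hf u hu, hf (1/4) (by norm_num), hf (u+1/4) (by linarith), hquarter]
    have e1 : -1 / Real.log u = 1 / (-Real.log u) := by ring
    have e2 : -1 / -(2*L) = 1 / (2*L) := by ring
    have e3 : -1 / Real.log (u+1/4) = 1 / (-Real.log (u+1/4)) := by ring
    rw [e1, e2, e3]
    linarith
end
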